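/- arXiv:1006.5652 — 2 statements merged into one kernel-verified Lean document; each statement's English description precedes it below -/
import Mathlib

section
/- (Gauss's binomial formula) For every q > 0, all complex numbers z and a, and every natural number n, one has ∏_{j=0}^{n-1} (z + a q^j) = ∑_{j=0}^{n} q^{j(j-1)/2} · ([n]_q! / ([j]_q! [n-j]_q!)) · a^j z^{n-j}. -/
/-- The q-integer `[k]_q = 1 + q + q^2 + ⋯ + q^(k-1)`. -/
noncomputable def qInt (q : ℝ) (k : ℕ) : ℝ := ∑ i ∈ Finset.range k, q ^ i

/-- The q-factorial `[n]_q! = [1]_q [2]_q ⋯ [n]_q`, with `[0]_q! = 1`. -/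
noncomputable def qFact (q : ℝ) (n : ℕ) : ℝ := ∏ k ∈ Finset.range n, qInt q (k + 1)

/-!
Gauss's coefficients are introduced through the q-Pascal rule
`[n+1, k+1]_q = [n, k]_q + q^(k+1) [n, k+1]_q`, which needs no division and makes sense in any
commutative semiring. Splitting off the first factor, `∏_{j<n+1} (z + a q^j)` is
`(z + a) ∏_{j<n} (z + (a q) q^j)`, so an induction on `n` (with `a` generalized) gives the
expansion with these coefficients. The same rule together with `[n+1]_q = [k+1]_q + q^(k+1) [n-k]_q`
shows `[n, k]_q [k]_q! [n-k]_q! = [n]_q!`, and for `q > 0` the q-factorials do not vanish.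
-/

open Finset

section qChoose

variable {R : Type*} [CommSemiring R]

def qChoose (q : R) : ℕ → ℕ → R
  | _, 0 => 1
  | 0, _ + 1 => 0
  | n + 1, k + 1 => qChoose q n k + q ^ (k + 1) * qChoose q n (k + 1)

@[simp]
theorem qChoose_zero_right (q : R) (n : ℕ) : qChoose q n 0 = 1 := by
  cases n <;> rfl

@[simp]
theorem qChoose_zero_succ (q : R) (k : ℕ) : qChoose q 0 (k + 1) = 0 := rfl

theorem qChoose_succ_succ (q : R) (n k : ℕ) :
    qChoose q (n + 1) (k + 1) = qChoose q n k + q ^ (k + 1) * qChoose q n (k + 1) := rfl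

theorem qChoose_eq_zero_of_lt (q : R) {n k : ℕ} (h : n < k) : qChoose q n k = 0 := by
  induction n generalizing k with
  | zero => obtain ⟨k, rfl⟩ := Nat.exists_eq_succ_of_ne_zero h.ne'; rfl
  | succ n ih =>
    obtain ⟨k, rfl⟩ := Nat.exists_eq_succ_of_ne_zero (Nat.ne_zero_of_lt h)
    rw [qChoose_succ_succ, ih (by omega), ih (by omega), mul_zero, add_zero]

theorem map_qChoose {S : Type*} [CommSemiring S] (f : R →+* S) (q : R) (n k : ℕ) :
    f (qChoose q n k) = qChoose (f q) n k := by
  induction n generalizing k with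
  | zero => cases k <;> simp
  | succ n ih => cases k <;> simp [qChoose_succ_succ, ih]

theorem prod_add_mul_pow_eq_sum_qChoose (q z a : R) (n : ℕ) :
    ∏ j ∈ range n, (z + a * q ^ j) =
      ∑ j ∈ range (n + 1), q ^ (j * (j - 1) / 2) * qChoose q n j * a ^ j * z ^ (n - j) := by
  induction n generalizing a with
  | zero => simp
  | succ n ih =>
    set S := ∑ j ∈ range (n + 1), q ^ (j * (j - 1) / 2) * qChoose q n j * (a * q) ^ j * z ^ (n - j)
    have h_prod : ∏ j ∈ range (n + 1), (z + a * q ^ j) = (z + a) * S := by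
      rw [prod_range_succ', pow_zero, mul_one, mul_comm]
      simp only [pow_succ', ← mul_assoc, ih, S]
    -- the vanishing term `j = n + 1` lets this sum be shifted like the one on the right
    have h_zS : z * S = ∑ j ∈ range (n + 2),
        q ^ (j * (j - 1) / 2) * q ^ j * qChoose q n j * a ^ j * z ^ (n + 1 - j) := by
      rw [sum_range_succ _ (n + 1), qChoose_eq_zero_of_lt q (Nat.lt_succ_self n), mul_sum]
      simp only [mul_zero, zero_mul, add_zero]
      refine sum_congr rfl fun j hj => ?_
      rw [show n + 1 - j = n - j + 1 by have := mem_range.mp hj; omega]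
      ring
    have h_aS : a * S = ∑ k ∈ range (n + 1),
        q ^ ((k + 1) * (k + 1 - 1) / 2) * qChoose q n k * a ^ (k + 1) * z ^ (n - k) := by
      rw [mul_sum]
      refine sum_congr rfl fun k _ => ?_
      rw [Nat.triangle_succ]
      ring
    have h_pascal : ∀ k, q ^ ((k + 1) * (k + 1 - 1) / 2) * qChoose q (n + 1) (k + 1) * a ^ (k + 1) *
        z ^ (n + 1 - (k + 1)) =
          q ^ ((k + 1) * (k + 1 - 1) / 2) * qChoose q n k * a ^ (k + 1) * z ^ (n - k) +
          q ^ ((k + 1) * (k + 1 - 1) / 2) * q ^ (k + 1) * qChoose q n (k + 1) * a ^ (k + 1) *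
            z ^ (n + 1 - (k + 1)) := fun k => by
      rw [qChoose_succ_succ, Nat.add_sub_add_right n 1 k]
      ring
    rw [h_prod, add_mul, h_zS, h_aS, sum_range_succ' _ (n + 1), sum_range_succ' _ (n + 1),
      sum_congr rfl fun k _ => h_pascal k, sum_add_distrib]
    simp only [qChoose_zero_right]
    ring

end qChoose

theorem qInt_add (q : ℝ) (m n : ℕ) : qInt q (m + n) = qInt q m + q ^ m * qInt q n := by
  simp only [qInt, sum_range_add, mul_sum, pow_add]

theorem qInt_succ_pos {q : ℝ} (hq : 0 < q) (k : ℕ) : 0 < qInt q (k + 1) :=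
  sum_pos (fun i _ => pow_pos hq i) nonempty_range_add_one

theorem qFact_pos {q : ℝ} (hq : 0 < q) (n : ℕ) : 0 < qFact q n :=
  prod_pos fun k _ => qInt_succ_pos hq k

@[simp]
theorem qFact_zero (q : ℝ) : qFact q 0 = 1 := prod_range_zero _

theorem qFact_succ (q : ℝ) (n : ℕ) : qFact q (n + 1) = qFact q n * qInt q (n + 1) :=
  prod_range_succ _ _

theorem qChoose_mul_qFact_mul_qFact (q : ℝ) {n k : ℕ} (h : k ≤ n) :
    qChoose q n k * qFact q k * qFact q (n - k) = qFact q n := by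
  induction n generalizing k with
  | zero => obtain rfl := Nat.le_zero.mp h; simp
  | succ n ih =>
    rcases k with _ | k
    · simp
    rw [qChoose_succ_succ, Nat.add_sub_add_right]
    rcases (Nat.le_of_succ_le_succ h).eq_or_lt with rfl | hkn
    · have ih_self := ih le_rfl
      rw [Nat.sub_self] at ih_self
      rw [qChoose_eq_zero_of_lt q (Nat.lt_succ_self k), qFact_succ, Nat.sub_self]
      linear_combination qInt q (k + 1) * ih_self
    · obtain ⟨m, rfl⟩ : ∃ m, n = k + 1 + m := ⟨n - (k + 1), by omega⟩
      have ih_k := ih (k := k) (by omega)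
      have ih_succ := ih (k := k + 1) (by omega)
      rw [show k + 1 + m - k = m + 1 by omega, qFact_succ q m] at ih_k ⊢
      rw [Nat.add_sub_cancel_left, qFact_succ q k] at ih_succ
      rw [qFact_succ q k, qFact_succ q (k + 1 + m), show k + 1 + m + 1 = k + 1 + (m + 1) by omega,
        qInt_add q (k + 1) (m + 1)]
      linear_combination qInt q (k + 1) * ih_k + q ^ (k + 1) * qInt q (m + 1) * ih_succ

theorem qChoose_eq_qFact_div {q : ℝ} (hq : 0 < q) {n k : ℕ} (h : k ≤ n) :
    qChoose q n k = qFact q n / (qFact q k * qFact q (n - k)) := by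
  rw [eq_div_iff (mul_pos (qFact_pos hq k) (qFact_pos hq (n - k))).ne', ← mul_assoc,
    qChoose_mul_qFact_mul_qFact q h]

/-- Gauss's binomial formula:
`∏_{j=0}^{n-1} (z + a q^j) = ∑_{j=0}^{n} q^(j(j-1)/2) ([n]_q!/([j]_q! [n-j]_q!)) a^j z^(n-j)`. -/
theorem gauss_binomial (q : ℝ) (hq : 0 < q) (z a : ℂ) (n : ℕ) :
    ∏ j ∈ Finset.range n, (z + a * (q : ℂ) ^ j) =
      ∑ j ∈ Finset.range (n + 1),
        (q : ℂ) ^ (j * (j - 1) / 2) *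
          ((qFact q n : ℂ) / ((qFact q j : ℂ) * (qFact q (n - j) : ℂ))) *
          a ^ j * z ^ (n - j) := by
  rw [prod_add_mul_pow_eq_sum_qChoose]
  refine sum_congr rfl fun j hj => ?_
  rw [← Complex.ofRealHom_eq_coe, ← map_qChoose,
    qChoose_eq_qFact_div hq (Nat.lt_succ_iff.mp (mem_range.mp hj))]
  simp
end

section
/- Let q > 0, q ≠ 1, and R_q = 2/(1-q) if 0 < q < 1, R_q = 2q/(q-1) if q > 1. Then for every complex z such that both |z| < R_q and |qz| < R_q, one has 𝓔_q(qz) · (1 + (1-q)z/2) = 𝓔_q(z) · (1 - (1-q)z/2), i.e. 𝓔_q(qz) = cay(-z/2, 1-q) · 𝓔_q(z) whenever 1 + (1-q)z/2 ≠ 0, where cay(w, a) = (1 + aw)/(1 - aw) is the Cayley transformation and 𝓔_q(z) = ∑_{n=0}^∞ z^n/{n}_q!. -/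
/-!
Write `a_n = 1/{n}_q!`. Since `(1 - q^(n+1)) / {n+1}_q = (1 - q)(1 + q^n)/2`, the coefficients
satisfy `(q^(n+1) - 1) a_(n+1) = -((1 - q)/2) (q^n + 1) a_n`, which says exactly that the
`(n+1)`-st coefficient of `𝓔_q(qz) - 𝓔_q(z)` is `-(1 - q)z/2` times the `n`-th coefficient of
`𝓔_q(qz) + 𝓔_q(z)`. Summing over `n` gives the identity; both series converge by the ratio
test, as `{n}_q → R_q`.
-/

/-- The symbol `{n}_q = 2(1-q^n)/((1-q)(1+q^(n-1)))` (for `n ≥ 1`). -/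
noncomputable def qBrace (q : ℝ) (n : ℕ) : ℝ :=
  2 * (1 - q ^ n) / ((1 - q) * (1 + q ^ (n - 1)))

/-- The factorial `{n}_q! = {1}_q {2}_q ⋯ {n}_q`, with `{0}_q! = 1`. -/
noncomputable def qBraceFact (q : ℝ) (n : ℕ) : ℝ := ∏ k ∈ Finset.range n, qBrace q (k + 1)

/-- The radius `R_q = 2/(1-q)` for `0 < q < 1` and `R_q = 2q/(q-1)` for `q > 1`. -/
noncomputable def Rq (q : ℝ) : ℝ := if q < 1 then 2 / (1 - q) else 2 * q / (q - 1)

/-- The improved q-exponential function `𝓔_q(z) = ∑_{n=0}^∞ z^n/{n}_q!`. -/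
noncomputable def impExp (q : ℝ) (z : ℂ) : ℂ := ∑' n : ℕ, z ^ n / (qBraceFact q n : ℂ)

/-- The Cayley transformation `cay(w, a) = (1 + aw)/(1 - aw)`. -/
noncomputable def cay (w a : ℂ) : ℂ := (1 + a * w) / (1 - a * w)

open Filter Topology Finset

lemma qBrace_succ_eq_geom_sum {q : ℝ} (hq1 : q ≠ 1) (n : ℕ) :
    qBrace q (n + 1) = 2 * (∑ i ∈ range (n + 1), q ^ i) / (1 + q ^ n) := by
  rw [qBrace, geom_sum_eq hq1, Nat.add_sub_cancel, mul_div_assoc', div_div, ← neg_sub 1 q,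
    ← neg_sub 1 (q ^ (n + 1)), mul_neg, neg_mul, neg_div_neg_eq]

lemma qBrace_succ_pos {q : ℝ} (hq : 0 < q) (hq1 : q ≠ 1) (n : ℕ) : 0 < qBrace q (n + 1) := by
  rw [qBrace_succ_eq_geom_sum hq1]
  positivity

lemma qBraceFact_succ (q : ℝ) (n : ℕ) :
    qBraceFact q (n + 1) = qBraceFact q n * qBrace q (n + 1) :=
  prod_range_succ _ _

lemma qBrace_inv_succ {q : ℝ} (hq : 0 < q) (hq1 : q ≠ 1) (n : ℕ) :
    qBrace q⁻¹ (n + 1) = qBrace q (n + 1) := by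
  simp only [qBrace, Nat.add_sub_cancel, inv_pow]
  field_simp
  ring

lemma Rq_inv {q : ℝ} (hq : 0 < q) (hq1 : q ≠ 1) : Rq q⁻¹ = Rq q := by
  rcases hq1.lt_or_gt with h | h
  · rw [Rq, Rq, if_neg (one_lt_inv₀ hq |>.2 h).not_gt, if_pos h]
    field_simp
  · rw [Rq, Rq, if_pos (inv_lt_one_of_one_lt₀ h), if_neg h.not_gt]
    field_simp

lemma Rq_pos {q : ℝ} (hq : 0 < q) (hq1 : q ≠ 1) : 0 < Rq q := by
  unfold Rq
  split_ifs with h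
  · exact div_pos two_pos (sub_pos.2 h)
  · exact div_pos (by positivity) (sub_pos.2 (lt_of_le_of_ne (not_lt.1 h) hq1.symm))

lemma tendsto_qBrace_of_lt_one {q : ℝ} (hq : 0 < q) (hq1 : q < 1) :
    Tendsto (fun n => qBrace q (n + 1)) atTop (𝓝 (Rq q)) := by
  have hgeom : Tendsto (fun n => ∑ i ∈ range (n + 1), q ^ i) atTop (𝓝 (1 - q)⁻¹) :=
    (hasSum_geometric_of_lt_one hq.le hq1).tendsto_sum_nat.comp (tendsto_add_atTop_nat 1)
  have hpow := tendsto_pow_atTop_nhds_zero_of_lt_one hq.le hq1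
  have hlim : Tendsto (fun n => 2 * (∑ i ∈ range (n + 1), q ^ i) / (1 + q ^ n)) atTop
      (𝓝 (2 * (1 - q)⁻¹ / (1 + 0))) :=
    (hgeom.const_mul 2).div (tendsto_const_nhds.add hpow) (by norm_num)
  rw [add_zero, div_one, ← div_eq_mul_inv] at hlim
  simpa only [Rq, if_pos hq1, qBrace_succ_eq_geom_sum hq1.ne] using hlim

lemma tendsto_qBrace {q : ℝ} (hq : 0 < q) (hq1 : q ≠ 1) :
    Tendsto (fun n => qBrace q (n + 1)) atTop (𝓝 (Rq q)) := by
  rcases hq1.lt_or_gt with h | h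
  · exact tendsto_qBrace_of_lt_one hq h
  · simpa only [qBrace_inv_succ hq hq1, Rq_inv hq hq1] using
      tendsto_qBrace_of_lt_one (inv_pos.2 hq) (inv_lt_one_of_one_lt₀ h)

lemma one_sub_pow_succ_div_qBrace {q : ℝ} (hq : 0 < q) (hq1 : q ≠ 1) (n : ℕ) :
    (1 - q ^ (n + 1)) / qBrace q (n + 1) = (1 - q) * (1 + q ^ n) / 2 := by
  have hnum : 1 - q ^ (n + 1) ≠ 0 :=
    sub_ne_zero.2 fun h => hq1 ((pow_eq_one_iff_of_nonneg hq.le n.succ_ne_zero).1 h.symm)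
  rw [qBrace, Nat.add_sub_cancel]
  field_simp

lemma impExp_term_succ (q : ℝ) (w : ℂ) (n : ℕ) :
    w ^ (n + 1) / (qBraceFact q (n + 1) : ℂ) =
      w ^ n / (qBraceFact q n : ℂ) * (w / (qBrace q (n + 1) : ℂ)) := by
  rw [qBraceFact_succ, Complex.ofReal_mul, pow_succ, mul_div_mul_comm]

lemma summable_impExp {q : ℝ} (hq : 0 < q) (hq1 : q ≠ 1) {w : ℂ} (hw : ‖w‖ < Rq q) :
    Summable (fun n : ℕ => w ^ n / (qBraceFact q n : ℂ)) := by
  obtain ⟨r, hwr, hr1⟩ := exists_between ((div_lt_one (Rq_pos hq hq1)).2 hw)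
  have hratio : Tendsto (fun n => ‖w‖ / qBrace q (n + 1)) atTop (𝓝 (‖w‖ / Rq q)) :=
    tendsto_const_nhds.div (tendsto_qBrace hq hq1) (Rq_pos hq hq1).ne'
  refine summable_of_ratio_norm_eventually_le hr1 ?_
  filter_upwards [hratio.eventually_lt_const hwr] with n hn
  rw [impExp_term_succ, norm_mul, norm_div w, Complex.norm_real,
    Real.norm_of_nonneg (qBrace_succ_pos hq hq1 n).le, mul_comm]
  exact mul_le_mul_of_nonneg_right hn.le (norm_nonneg _)

lemma tsum_sub_eq_mul_tsum_add {α : Type*} [Ring α] [TopologicalSpace α] [IsTopologicalRing α]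
    [T2Space α] {f g : ℕ → α} (hf : Summable f) (hg : Summable g) (h0 : g 0 = f 0) (c : α)
    (hsucc : ∀ n, g (n + 1) - f (n + 1) = c * (g n + f n)) :
    ∑' n, g n - ∑' n, f n = c * (∑' n, g n + ∑' n, f n) := by
  rw [← hg.tsum_sub hf, (hg.sub hf).tsum_eq_zero_add, ← hg.tsum_add hf,
    ← (hg.add hf).tsum_mul_left c, h0, sub_self, zero_add]
  exact tsum_congr hsucc

lemma impExp_mul_sub_impExp {q : ℝ} (hq : 0 < q) (hq1 : q ≠ 1) {z : ℂ}
    (hz : ‖z‖ < Rq q) (hqz : ‖(q : ℂ) * z‖ < Rq q) :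
    impExp q (q * z) - impExp q z = -((1 - q) * z / 2) * (impExp q (q * z) + impExp q z) := by
  refine tsum_sub_eq_mul_tsum_add (summable_impExp hq hq1 hz) (summable_impExp hq hq1 hqz)
    (by simp) _ fun n => ?_
  have hratio : ((1 - q ^ (n + 1)) / qBrace q (n + 1) : ℂ) = (1 - q) * (1 + q ^ n) / 2 := by
    exact_mod_cast one_sub_pow_succ_div_qBrace hq hq1 n
  rw [impExp_term_succ, impExp_term_succ, mul_pow, mul_div_assoc]
  linear_combination (-(z ^ n / (qBraceFact q n : ℂ) * z)) * hratio

/-- For `|z| < R_q` and `|qz| < R_q`: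
`𝓔_q(qz)(1 + (1-q)z/2) = 𝓔_q(z)(1 - (1-q)z/2)`, and whenever `1 + (1-q)z/2 ≠ 0`,
`𝓔_q(qz) = cay(-z/2, 1-q) · 𝓔_q(z)`. -/
theorem impExp_cayley (q : ℝ) (hq : 0 < q) (hq1 : q ≠ 1) (z : ℂ)
    (hz : ‖z‖ < Rq q) (hqz : ‖(q : ℂ) * z‖ < Rq q) :
    impExp q ((q : ℂ) * z) * (1 + (1 - (q : ℂ)) * z / 2) =
      impExp q z * (1 - (1 - (q : ℂ)) * z / 2) ∧
    (1 + (1 - (q : ℂ)) * z / 2 ≠ 0 →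
      impExp q ((q : ℂ) * z) = cay (-z / 2) (1 - (q : ℂ)) * impExp q z) := by
  have hcross : impExp q (q * z) * (1 + (1 - q) * z / 2) = impExp q z * (1 - (1 - q) * z / 2) := by
    linear_combination impExp_mul_sub_impExp hq hq1 hz hqz
  refine ⟨hcross, fun hne => ?_⟩
  have hne' : 1 - (1 - (q : ℂ)) * (-z / 2) ≠ 0 := by
    rwa [mul_div_assoc', mul_neg, neg_div, sub_neg_eq_add]
  rw [cay, div_mul_eq_mul_div, eq_div_iff hne']
  linear_combination hcross
end
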